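/- If g : ℝ → ℂ is a Schwartz function, then for any p ≥ 0 there exists a constant C > 0 such that for every natural number n ≥ 1, ∫_{-n/2}^{n/2} |ξ|^p |F_n(g)(ξ)|² dξ ≤ C, where F_n(g) is the discrete Fourier transform of g. -/

import Mathlib

/-!
Poisson summation for `t ↦ ĝ (n t)` at the point `-ξ / n`, followed by Fourier inversion, turns the
discrete Fourier transform into the periodization `F_n g (ξ) = ∑ₘ ĝ (m n - ξ)`. For `|ξ| ≤ n / 2`
each aliased frequency `m n - ξ` is at least as large as `ξ` and of size at least `(1 + |m|) / 2`,
so the rapid decay of `ĝ` gives `|F_n g (ξ)| ≤ D (1 + |ξ|)⁻ᵏ` uniformly in `n`, for every `k`.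
With `2 k > p + 1` the integrand is then dominated by an integrable function independent of `n`.
-/

open MeasureTheory Real

/-- The discrete Fourier transform of an integrable function. -/
noncomputable def discreteFourier (g : ℝ → ℂ) (n : ℕ) (ξ : ℝ) : ℂ :=
  (1 / (n : ℂ)) * ∑' x : ℤ, g ((x : ℝ) / n) *
    Complex.exp (2 * (π : ℂ) * Complex.I * (x : ℂ) * (ξ : ℂ) / (n : ℂ))

open FourierTransform SchwartzMap

theorem Real.fourier_comp_mul_right {E : Type*} [NormedAddCommGroup E] [NormedSpace ℂ E]
    (f : ℝ → E) {a : ℝ} (ha : a ≠ 0) (w : ℝ) :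
    𝓕 (fun t ↦ f (t * a)) w = |a⁻¹| • 𝓕 f (w / a) := by
  simp only [fourier_real_eq]
  have hrescale : ∀ v : ℝ, v * w = v * a * (w / a) := fun v ↦ by field_simp
  simp_rw [hrescale]
  exact Measure.integral_comp_mul_right (fun y ↦ 𝐞 (-(y * (w / a))) • f y) a

theorem SchwartzMap.fourier_fourier_apply {V E : Type*} [NormedAddCommGroup V]
    [InnerProductSpace ℝ V] [FiniteDimensional ℝ V] [MeasurableSpace V] [BorelSpace V]
    [NormedAddCommGroup E] [NormedSpace ℂ E] [CompleteSpace E] (f : 𝓢(V, E)) (x : V) :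
    𝓕 (𝓕 (f : V → E)) x = f (-x) := by
  conv_lhs => rw [← neg_neg x, ← fourierInv_eq_fourier_neg, ← fourier_coe, ← fourierInv_coe,
    fourierInv_fourier_eq]

theorem discreteFourier_eq_tsum_fourier (g : 𝓢(ℝ, ℂ)) {n : ℕ} (hn : n ≠ 0) (ξ : ℝ) :
    discreteFourier g n ξ = ∑' m : ℤ, 𝓕 (g : ℝ → ℂ) (m * n - ξ) := by
  have hn' : (n : ℝ) ≠ 0 := Nat.cast_ne_zero.2 hn
  let φ : 𝓢(ℝ, ℂ) := compCLMOfContinuousLinearEquiv ℂ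
    (ContinuousLinearEquiv.unitsEquivAut ℝ (Units.mk0 (n : ℝ) hn')) (𝓕 g)
  have hφ : (φ : ℝ → ℂ) = fun t ↦ 𝓕 (g : ℝ → ℂ) (t * n) := rfl
  have hφ_fourier : ∀ m : ℤ, 𝓕 φ m = (1 / n : ℂ) * g (-(m / n)) := by
    intro m
    rw [fourier_coe, hφ, Real.fourier_comp_mul_right _ hn', fourier_fourier_apply]
    simp
  have poisson := SchwartzMap.tsum_eq_tsum_fourier φ (-ξ / n)
  simp only [hφ, hφ_fourier, fourier_coe_apply] at poisson
  rw [discreteFourier, ← tsum_mul_left, ← (Equiv.neg ℤ).tsum_eq]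
  convert poisson.symm using 1 <;> refine tsum_congr fun m ↦ ?_
  · push_cast [Equiv.neg_apply]
    ring_nf
  · rw [add_mul, neg_div, neg_mul, div_mul_cancel₀ _ hn', neg_add_eq_sub]

theorem summable_one_div_one_add_abs_int_sq :
    Summable fun m : ℤ ↦ 1 / (1 + |(m : ℝ)|) ^ 2 := by
  have h := (summable_nat_add_iff 1).2 (Real.summable_one_div_nat_pow.2 one_lt_two)
  refine summable_int_iff_summable_nat_and_neg.2 ⟨?_, ?_⟩ <;>
    convert h using 2 with m <;> push_cast <;> simp [abs_of_nonneg, add_comm]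

theorem SchwartzMap.exists_one_add_norm_pow_mul_le {E F : Type*} [NormedAddCommGroup E]
    [NormedSpace ℝ E] [NormedAddCommGroup F] [NormedSpace ℝ F] (f : 𝓢(E, F)) (k : ℕ) :
    ∃ C, ∀ x, (1 + ‖x‖) ^ k * ‖f x‖ ≤ C :=
  ⟨_, fun x ↦ by
    simpa using one_add_le_sup_seminorm_apply (𝕜 := ℝ) (m := (k, 0)) le_rfl le_rfl f x⟩

section Aliasing

variable {n ξ : ℝ}

theorem abs_le_abs_int_mul_sub (hξ : |ξ| ≤ n / 2) (m : ℤ) : |ξ| ≤ |m * n - ξ| := by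
  rcases eq_or_ne m 0 with rfl | hm
  · simp
  have hm : (1 : ℝ) ≤ |(m : ℝ)| := by exact_mod_cast Int.one_le_abs hm
  have htri := abs_sub_abs_le_abs_sub ((m : ℝ) * n) ξ
  have hn : 0 ≤ n := by linarith [abs_nonneg ξ]
  rw [abs_mul, abs_of_nonneg hn] at htri
  linarith [le_mul_of_one_le_left hn hm]

theorem one_add_abs_int_le_two_mul (hn : 1 ≤ n) (hξ : |ξ| ≤ n / 2) (m : ℤ) :
    1 + |(m : ℝ)| ≤ 2 * (1 + |m * n - ξ|) := by
  rcases eq_or_ne m 0 with rfl | hm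
  · simp only [Int.cast_zero, abs_zero, zero_mul, zero_sub, abs_neg]
    linarith [abs_nonneg ξ]
  have hm : (1 : ℝ) ≤ |(m : ℝ)| := by exact_mod_cast Int.one_le_abs hm
  have htri := abs_sub_abs_le_abs_sub ((m : ℝ) * n) ξ
  rw [abs_mul, abs_of_nonneg (by linarith : (0 : ℝ) ≤ n)] at htri
  nlinarith

end Aliasing

theorem norm_discreteFourier_le (g : 𝓢(ℝ, ℂ)) (k : ℕ) :
    ∃ D, ∀ n : ℕ, 1 ≤ n → ∀ ξ : ℝ, |ξ| ≤ n / 2 →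
      ‖discreteFourier g n ξ‖ ≤ D / (1 + |ξ|) ^ k := by
  obtain ⟨C, hC⟩ := (𝓕 g).exists_one_add_norm_pow_mul_le (k + 2)
  set w : ℤ → ℝ := fun m ↦ 1 / (1 + |(m : ℝ)|) ^ 2
  refine ⟨4 * C * ∑' m, w m, fun n hn ξ hξ ↦ ?_⟩
  have hn' : (1 : ℝ) ≤ n := by exact_mod_cast hn
  have hterm : ∀ m : ℤ, ‖𝓕 (g : ℝ → ℂ) (m * n - ξ)‖ ≤ 4 * C / (1 + |ξ|) ^ k * w m := by
    intro m
    set u : ℝ := m * n - ξ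
    have hweight : (1 + |(m : ℝ)|) ^ 2 * (1 + |ξ|) ^ k ≤ 4 * (1 + |u|) ^ (k + 2) :=
      calc (1 + |(m : ℝ)|) ^ 2 * (1 + |ξ|) ^ k ≤ (2 * (1 + |u|)) ^ 2 * (1 + |u|) ^ k := by
            gcongr ?_ ^ 2 * (1 + ?_) ^ k
            · exact one_add_abs_int_le_two_mul hn' hξ m
            · exact abs_le_abs_int_mul_sub hξ m
        _ = 4 * (1 + |u|) ^ (k + 2) := by ring
    have hdecay := hC u
    rw [Real.norm_eq_abs, fourier_coe] at hdecay
    rw [div_mul_div_comm, mul_one, le_div_iff₀ (by positivity)]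
    calc ‖𝓕 (g : ℝ → ℂ) u‖ * ((1 + |ξ|) ^ k * (1 + |(m : ℝ)|) ^ 2)
        ≤ ‖𝓕 (g : ℝ → ℂ) u‖ * (4 * (1 + |u|) ^ (k + 2)) := by
          rw [mul_comm ((1 + |ξ|) ^ k)]; gcongr
      _ ≤ 4 * C := by linarith
  rw [discreteFourier_eq_tsum_fourier g (Nat.one_le_iff_ne_zero.1 hn)]
  calc ‖∑' m : ℤ, 𝓕 (g : ℝ → ℂ) (m * n - ξ)‖ ≤ 4 * C / (1 + |ξ|) ^ k * ∑' m, w m :=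
        tsum_of_norm_bounded (summable_one_div_one_add_abs_int_sq.hasSum.mul_left _) hterm
    _ = 4 * C * (∑' m, w m) / (1 + |ξ|) ^ k := by ring

theorem intervalIntegral_abs_rpow_mul_sq_le {f : ℝ → ℂ} {a b p D : ℝ} {k : ℕ} (hab : a ≤ b)
    (hp : 0 ≤ p) (hpk : p + 1 < 2 * k) (hf : ∀ ξ ∈ Set.Icc a b, ‖f ξ‖ ≤ D / (1 + |ξ|) ^ k) :
    ∫ ξ in a..b, |ξ| ^ p * ‖f ξ‖ ^ 2 ≤ D ^ 2 * ∫ ξ : ℝ, (1 + |ξ|) ^ (p - 2 * k) := by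
  have hint : Integrable fun ξ : ℝ ↦ D ^ 2 * (1 + |ξ|) ^ (p - 2 * k) := by
    refine Integrable.const_mul ?_ _
    simpa [neg_sub] using integrable_one_add_norm (E := ℝ) (μ := volume) (r := 2 * k - p)
      (by simp; linarith)
  have hle : ∀ ξ ∈ Set.Icc a b, |ξ| ^ p * ‖f ξ‖ ^ 2 ≤ D ^ 2 * (1 + |ξ|) ^ (p - 2 * k) := by
    intro ξ hξ
    have hpos : 0 < 1 + |ξ| := by positivity
    calc |ξ| ^ p * ‖f ξ‖ ^ 2 ≤ (1 + |ξ|) ^ p * (D / (1 + |ξ|) ^ k) ^ 2 := by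
          gcongr
          · linarith
          · exact hf ξ hξ
      _ = D ^ 2 * (1 + |ξ|) ^ (p - 2 * k) := by
          rw [Real.rpow_sub hpos, show (2 * k : ℝ) = ((2 * k : ℕ) : ℝ) by push_cast; ring,
            Real.rpow_natCast]
          ring
  rw [intervalIntegral.integral_of_le hab, ← integral_const_mul]
  calc ∫ ξ in Set.Ioc a b, |ξ| ^ p * ‖f ξ‖ ^ 2
      ≤ ∫ ξ in Set.Ioc a b, D ^ 2 * (1 + |ξ|) ^ (p - 2 * k) :=
        integral_mono_of_nonneg (.of_forall fun ξ ↦ by positivity) hint.integrableOn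
          ((ae_restrict_iff' measurableSet_Ioc).2
            (.of_forall fun ξ hξ ↦ hle ξ (Set.Ioc_subset_Icc_self hξ)))
    _ ≤ ∫ ξ, D ^ 2 * (1 + |ξ|) ^ (p - 2 * k) :=
        setIntegral_le_integral hint (.of_forall fun ξ ↦ by positivity)

theorem stmt_3 (g : SchwartzMap ℝ ℂ) (p : ℝ) (hp : 0 ≤ p) :
    ∃ C : ℝ, 0 < C ∧ ∀ n : ℕ, 1 ≤ n →
      (∫ ξ in (-(n : ℝ)/2)..((n : ℝ)/2),
        |ξ| ^ p * ‖discreteFourier (fun u => g u) n ξ‖ ^ 2) ≤ C := by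
  set k := ⌈p⌉₊ + 1
  have hpk : p + 1 < 2 * k := by push_cast [k]; linarith [Nat.le_ceil p]
  obtain ⟨D, hD⟩ := norm_discreteFourier_le g k
  set I := ∫ ξ : ℝ, (1 + |ξ|) ^ (p - 2 * k)
  refine ⟨D ^ 2 * I + 1, by positivity, fun n hn ↦ ?_⟩
  calc _ ≤ D ^ 2 * I := intervalIntegral_abs_rpow_mul_sq_le
        (by linarith [Nat.cast_nonneg (α := ℝ) n]) hp hpk
        fun ξ hξ ↦ hD n hn ξ (abs_le.2 ⟨by linarith [hξ.1], hξ.2⟩)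
    _ ≤ D ^ 2 * I + 1 := by linarith
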